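/- Let G be a group whose derived subgroup G′ = [G,G] has a complement in G, i.e. there is a subgroup B ≤ G with G = G′B and G′ ∩ B = 1. Then Δ(G) is isomorphic to Δ(G_ab), where G_ab = G/G′ is the abelianization of G. -/

import Mathlib

/- Nonabelian tensor square framework (Brown–Loday). -/

namespace NATensor

variable (G : Type*) [Group G]

/-- The relator set for the nonabelian tensor square of `G`:
`g g' ⊗ h = (ᵍg' ⊗ ᵍh)(g ⊗ h)` and `g ⊗ h h' = (g ⊗ h)(ʰg ⊗ ʰh')`. -/
def rels : Set (FreeGroup (G × G)) :=
  {r | (∃ g g' h : G,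
          r = FreeGroup.of (g * g', h) *
              (FreeGroup.of (g * g' * g⁻¹, g * h * g⁻¹) * FreeGroup.of (g, h))⁻¹) ∨
       (∃ g h h' : G,
          r = FreeGroup.of (g, h * h') *
              (FreeGroup.of (g, h) * FreeGroup.of (h * g * h⁻¹, h * h' * h⁻¹))⁻¹)}

/-- The nonabelian tensor square `G ⊗ G`. -/
abbrev TS := PresentedGroup (rels G)

variable {G}

/-- The generator `g ⊗ h` of the nonabelian tensor square. -/
def tmul (g h : G) : TS G := PresentedGroup.of (g, h)

lemma mk_rel_eq_one {r : FreeGroup (G × G)} (hr : r ∈ rels G) :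
    (PresentedGroup.mk (rels G) r : TS G) = 1 :=
  (QuotientGroup.eq_one_iff r).mpr (Subgroup.subset_normalClosure hr)

lemma tmul_rel₁ (g g' h : G) :
    tmul (g * g') h = tmul (g * g' * g⁻¹) (g * h * g⁻¹) * tmul g h := by
  have h1 := mk_rel_eq_one (G := G) (Or.inl ⟨g, g', h, rfl⟩)
  simp only [map_mul, map_inv, mul_inv_eq_one] at h1
  exact h1

lemma tmul_rel₂ (g h h' : G) :
    tmul g (h * h') = tmul g h * tmul (h * g * h⁻¹) (h * h' * h⁻¹) := by
  have h1 := mk_rel_eq_one (G := G) (Or.inr ⟨g, h, h', rfl⟩)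
  simp only [map_mul, map_inv, mul_inv_eq_one] at h1
  exact h1

variable (G)

/-- The homomorphism `κ : G ⊗ G → G`, `g ⊗ h ↦ [g,h] = g h g⁻¹ h⁻¹` (its image is `[G,G]`). -/
def kappa : TS G →* G :=
  PresentedGroup.toGroup (f := fun x : G × G => x.1 * x.2 * x.1⁻¹ * x.2⁻¹) (by
    rintro r (⟨g, g', h, rfl⟩ | ⟨g, h, h', rfl⟩) <;>
      simp only [map_mul, map_inv, FreeGroup.lift_apply_of] <;> group)

variable {G}

@[simp] lemma kappa_tmul (g h : G) : kappa G (tmul g h) = g * h * g⁻¹ * h⁻¹ :=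
  PresentedGroup.toGroup.of _

variable (G)

/-- `J(G) = ker κ ≅ π₃(SK(G,1))`. -/
def J : Subgroup (TS G) := (kappa G).ker

/-- `∇(G)`: the (normal) subgroup of `G ⊗ G` generated by the elements `x ⊗ x`. -/
def nabla : Subgroup (TS G) :=
  Subgroup.normalClosure {t | ∃ x : G, t = tmul x x}

/-- `Δ(G)`: the (normal) subgroup of `G ⊗ G` generated by the `(x ⊗ y)(y ⊗ x)`. -/
def delta : Subgroup (TS G) :=
  Subgroup.normalClosure {t | ∃ x y : G, t = tmul x y * tmul y x}

instance : (nabla G).Normal := Subgroup.normalClosure_normal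

instance : (delta G).Normal := Subgroup.normalClosure_normal

/-- The exterior square `G ∧ G = (G ⊗ G)/∇(G)`. -/
abbrev ES := TS G ⧸ nabla G

/-- The symmetric square `G ⊗̃ G = (G ⊗ G)/Δ(G)`. -/
abbrev SS := TS G ⧸ delta G

variable {G}

/-- The element `g ∧ h` of the exterior square. -/
def emul (g h : G) : ES G := QuotientGroup.mk' (nabla G) (tmul g h)

/-- The image of `g ⊗ h` in the symmetric square. -/
def smul (g h : G) : SS G := QuotientGroup.mk' (delta G) (tmul g h)

variable {H : Type*} [Group H]

/-- The induced homomorphism `G ⊗ G → H ⊗ H` of a homomorphism `f : G → H`. -/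
def tmap (f : G →* H) : TS G →* TS H :=
  PresentedGroup.toGroup (f := fun x : G × G => tmul (f x.1) (f x.2)) (by
    rintro r (⟨g, g', h, rfl⟩ | ⟨g, h, h', rfl⟩) <;>
      simp only [map_mul, map_inv, FreeGroup.lift_apply_of, mul_inv_eq_one]
    · rw [tmul_rel₁]
    · rw [tmul_rel₂])

@[simp] lemma tmap_tmul (f : G →* H) (g h : G) :
    tmap f (tmul g h) = tmul (f g) (f h) :=
  PresentedGroup.toGroup.of _

lemma nabla_le_comap_nabla (f : G →* H) :
    nabla G ≤ MonoidHom.ker ((QuotientGroup.mk' (nabla H)).comp (tmap f)) := by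
  refine Subgroup.normalClosure_le_normal ?_
  rintro _ ⟨y, rfl⟩
  simp only [SetLike.mem_coe, MonoidHom.mem_ker, MonoidHom.comp_apply, tmap_tmul,
    QuotientGroup.mk'_apply, QuotientGroup.eq_one_iff]
  exact Subgroup.subset_normalClosure ⟨f y, rfl⟩

lemma delta_le_comap_delta (f : G →* H) :
    delta G ≤ MonoidHom.ker ((QuotientGroup.mk' (delta H)).comp (tmap f)) := by
  refine Subgroup.normalClosure_le_normal ?_
  rintro _ ⟨x, y, rfl⟩
  simp only [SetLike.mem_coe, MonoidHom.mem_ker, MonoidHom.comp_apply, map_mul, tmap_tmul,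
    QuotientGroup.mk'_apply, ← QuotientGroup.mk_mul, QuotientGroup.eq_one_iff]
  exact Subgroup.subset_normalClosure ⟨f x, f y, rfl⟩

/-- The induced homomorphism `G ∧ G → H ∧ H` of a homomorphism `f : G → H`. -/
def emap (f : G →* H) : ES G →* ES H :=
  QuotientGroup.lift (nabla G) ((QuotientGroup.mk' (nabla H)).comp (tmap f))
    (fun x hx => MonoidHom.mem_ker.mp (nabla_le_comap_nabla f hx))

@[simp] lemma emap_emul (f : G →* H) (g h : G) :
    emap f (emul g h) = emul (f g) (f h) := by
  simp only [emap, emul, QuotientGroup.mk'_apply]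
  exact (QuotientGroup.lift_mk _ _ _).trans (by simp)

/-- The induced homomorphism `G ⊗̃ G → H ⊗̃ H` of a homomorphism `f : G → H`. -/
def smap (f : G →* H) : SS G →* SS H :=
  QuotientGroup.lift (delta G) ((QuotientGroup.mk' (delta H)).comp (tmap f))
    (fun x hx => MonoidHom.mem_ker.mp (delta_le_comap_delta f hx))

variable (G)

lemma nabla_le_ker_kappa : nabla G ≤ (kappa G).ker := by
  refine Subgroup.normalClosure_le_normal ?_
  rintro _ ⟨x, rfl⟩
  simp only [SetLike.mem_coe, MonoidHom.mem_ker, kappa_tmul]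
  group

/-- The homomorphism `κ' : G ∧ G → G`, `g ∧ h ↦ [g,h]` (its image is `[G,G]`). -/
def kappa' : ES G →* G :=
  QuotientGroup.lift (nabla G) (kappa G)
    (fun x hx => MonoidHom.mem_ker.mp (nabla_le_ker_kappa G hx))

/-- The Schur multiplier `M(G) = ker κ' ≅ H₂(G)`. -/
def M : Subgroup (ES G) := (kappa' G).ker

/-- `J̃(G) = J(G)/Δ(G) ≅ π₂ˢ(K(G,1))`, realized as the image of `J(G)` in `G ⊗̃ G`. -/
def Jt : Subgroup (SS G) := Subgroup.map (QuotientGroup.mk' (delta G)) (J G)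

/-- `∇(G)/Δ(G)`, realized as the image of `∇(G)` in `G ⊗̃ G`. -/
def nablaBar : Subgroup (SS G) := Subgroup.map (QuotientGroup.mk' (delta G)) (nabla G)

end NATensor

/-!
`Δ(G)` lies in `J(G) = ker κ`, which is central by the Peiffer identity (conjugation by `t` is
the action of `κ t`). Expanding the defining relations shows that `(x, y) ↦ (x ⊗ y)(y ⊗ x)` is
symmetric and multiplicative in each variable; as it takes central values it kills commutators, so
it only depends on the images of `x` and `y` in `G_ab`. A complement of `[G,G]` is a section
`σ : G_ab → G` of the abelianization map `π`, and then `π` and `σ` induce mutually inverse maps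
between `Δ(G)` and `Δ(G_ab)`: one composite is induced by `π ∘ σ = id`, the other by `σ ∘ π`,
which fixes the generators of `Δ(G)`.
-/

lemma Subgroup.normalClosure_eq_closure_of_subset_center {G : Type*} [Group G] {s : Set G}
    (hs : s ⊆ Subgroup.center G) : Subgroup.normalClosure s = Subgroup.closure s := by
  have hle : Subgroup.closure s ≤ Subgroup.center G := (Subgroup.closure_le _).mpr hs
  have : (Subgroup.closure s).Normal :=
    ⟨fun n hn g => by rwa [Subgroup.mem_center_iff.mp (hle hn) g, mul_inv_cancel_right]⟩
  exact le_antisymm (Subgroup.normalClosure_le_normal Subgroup.subset_closure)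
    Subgroup.closure_le_normalClosure

namespace NATensor

variable {G H K : Type*} [Group G] [Group H] [Group K]

lemma TS.hom_ext {M : Type*} [Group M] {φ ψ : TS G →* M}
    (h : ∀ x y, φ (tmul x y) = ψ (tmul x y)) : φ = ψ :=
  PresentedGroup.ext fun p => h p.1 p.2

lemma tmap_id : tmap (MonoidHom.id G) = MonoidHom.id (TS G) :=
  TS.hom_ext fun x y => by simp

lemma tmap_comp (f : H →* K) (e : G →* H) : tmap (f.comp e) = (tmap f).comp (tmap e) :=
  TS.hom_ext fun x y => by simp

def tmapEquiv (e : G ≃* H) : TS G ≃* TS H :=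
  MonoidHom.toMulEquiv (tmap e.toMonoidHom) (tmap e.symm.toMonoidHom)
    (TS.hom_ext fun x y => by simp) (TS.hom_ext fun x y => by simp)

@[simp] lemma tmapEquiv_apply (e : G ≃* H) (t : TS G) : tmapEquiv e t = tmap e.toMonoidHom t :=
  rfl

def act : G →* MulAut (TS G) where
  toFun g := tmapEquiv (MulAut.conj g)
  map_one' := MulEquiv.toMonoidHom_injective (TS.hom_ext fun x y => by simp)
  map_mul' a b := MulEquiv.toMonoidHom_injective (TS.hom_ext fun x y => by simp [mul_assoc])

@[simp] lemma act_tmul (g x y : G) : act g (tmul x y) = tmul (g * x * g⁻¹) (g * y * g⁻¹) := by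
  simp [act]

@[simp] lemma tmul_one_left (h : G) : tmul (1 : G) h = 1 := by
  have h1 := tmul_rel₁ (1 : G) 1 h
  simp only [mul_one, one_mul, inv_one] at h1
  exact left_eq_mul.mp h1

lemma tmul_inv (g x : G) : (tmul g x)⁻¹ = tmul g⁻¹ (g * x * g⁻¹) := by
  have h1 := tmul_rel₁ g g⁻¹ x
  rw [mul_inv_cancel, tmul_one_left, one_mul] at h1
  exact (eq_inv_of_mul_eq_one_left h1.symm).symm

/-- Expanding `ga ⊗ hb` in the two possible orders. -/
lemma act_tmul_mul_tmul (g h a b : G) :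
    act (g * h) (tmul a b) * tmul g h = tmul g h * act (h * g) (tmul a b) := by
  have expand₁ : tmul (g * a) (h * b) = tmul (g * a * g⁻¹) (g * h * g⁻¹) *
      act (g * h) (tmul a b) * (tmul g h * tmul (h * g * h⁻¹) (h * b * h⁻¹)) := by
    rw [tmul_rel₁ g a (h * b), tmul_rel₂ g h b,
      show g * (h * b) * g⁻¹ = (g * h * g⁻¹) * (g * b * g⁻¹) by group,
      tmul_rel₂ (g * a * g⁻¹) (g * h * g⁻¹) (g * b * g⁻¹), act_tmul]
    congr 3 <;> group
  have expand₂ : tmul (g * a) (h * b) = tmul (g * a * g⁻¹) (g * h * g⁻¹) * tmul g h *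
      (act (h * g) (tmul a b) * tmul (h * g * h⁻¹) (h * b * h⁻¹)) := by
    rw [tmul_rel₂ (g * a) h b, tmul_rel₁ g a h,
      show h * (g * a) * h⁻¹ = (h * g * h⁻¹) * (h * a * h⁻¹) by group,
      tmul_rel₁ (h * g * h⁻¹) (h * a * h⁻¹) (h * b * h⁻¹), act_tmul]
    congr 3 <;> group
  have expand := expand₁.symm.trans expand₂
  rwa [mul_assoc, mul_assoc (tmul _ _) (tmul g h), mul_right_inj, ← mul_assoc, ← mul_assoc,
    mul_left_inj] at expand

lemma conj_tmul_mul_act (g h : G) : MulAut.conj (tmul g h) * act (h * g) = act (g * h) :=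
  MulEquiv.toMonoidHom_injective <| TS.hom_ext fun a b => by
    simp only [MulEquiv.coe_toMonoidHom, MulAut.mul_apply, MulAut.conj_apply]
    rw [← act_tmul_mul_tmul, mul_inv_cancel_right]

lemma conj_tmul (g h : G) : MulAut.conj (tmul g h) = act (g * h * g⁻¹ * h⁻¹) := by
  rw [eq_mul_inv_of_mul_eq (conj_tmul_mul_act g h), ← map_inv, ← map_mul]
  congr 1; group

/-- The Peiffer identity of the crossed module `κ : G ⊗ G → G`. -/
lemma conj_eq_act_comp_kappa : (MulAut.conj : TS G →* MulAut (TS G)) = act.comp (kappa G) :=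
  TS.hom_ext fun g h => by rw [MonoidHom.comp_apply, kappa_tmul, conj_tmul]

lemma J_le_center : J G ≤ Subgroup.center (TS G) := by
  intro s hs
  refine Subgroup.mem_center_iff.mpr fun t => ?_
  have hconj : MulAut.conj s t = t := by
    rw [conj_eq_act_comp_kappa, MonoidHom.comp_apply, MonoidHom.mem_ker.mp hs, map_one,
      MulAut.one_apply]
  rw [MulAut.conj_apply, mul_inv_eq_iff_eq_mul] at hconj
  exact hconj.symm

lemma tmul_self_mem_center (x : G) : tmul x x ∈ Subgroup.center (TS G) :=
  J_le_center (by simp [J])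

lemma tmul_self_conj (g x : G) : tmul (g * x * g⁻¹) (g * x * g⁻¹) = tmul x x := by
  -- `ᵍx ⊗ ᵍx = (g ⊗ x)(x ⊗ x)(g ⊗ x)⁻¹`, and `x ⊗ x` is central
  have hA := tmul_rel₁ g⁻¹ (g * g * x * g⁻¹) (g * x * g⁻¹)
  rw [show g⁻¹ * (g * g * x * g⁻¹) * g⁻¹⁻¹ = g * x by group,
    show g⁻¹ * (g * x * g⁻¹) * g⁻¹⁻¹ = x by group,
    show g⁻¹ * (g * g * x * g⁻¹) = g * x * g⁻¹ by group, ← tmul_inv] at hA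
  have hB := tmul_rel₁ x (x⁻¹ * g * x) x
  rw [show x * (x⁻¹ * g * x) * x⁻¹ = g by group, show x * x * x⁻¹ = x by group,
    show x * (x⁻¹ * g * x) = g * x by group] at hB
  rw [hA, hB, Subgroup.mem_center_iff.mp (tmul_self_mem_center x), mul_inv_cancel_right]

def tmulSymm (x y : G) : TS G := tmul x y * tmul y x

lemma tmulSymm_mem_center (x y : G) : tmulSymm x y ∈ Subgroup.center (TS G) :=
  J_le_center (by simp only [J, MonoidHom.mem_ker, tmulSymm, map_mul, kappa_tmul]; group)

lemma tmulSymm_comm (x y : G) : tmulSymm x y = tmulSymm y x := by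
  have hxy : tmul x y * tmulSymm x y = tmul x y * tmulSymm y x := by
    rw [Subgroup.mem_center_iff.mp (tmulSymm_mem_center x y), tmulSymm, tmulSymm, mul_assoc]
  exact mul_left_cancel hxy

lemma tmul_self_mul (x y : G) : tmul (x * y) (x * y) = tmul y y * tmul x x * tmulSymm x y := by
  have conj_form : ∀ g h : G,
      tmul (g * h) (g * h) = tmul g g * tmul h h * tmulSymm (g * h * g⁻¹) g := by
    intro g h
    have h₁ := tmul_rel₂ (g * h) g h
    have h₂ := tmul_rel₁ g h g
    rw [show g * g * g⁻¹ = g by group] at h₂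
    have h₃ : tmul (g * (g * h) * g⁻¹) (g * h * g⁻¹) = tmul h h * tmul g (g * h * g⁻¹) := by
      rw [show g * (g * h) * g⁻¹ = g * (g * h * g⁻¹) by group, tmul_rel₁,
        show g * (g * h * g⁻¹) * g⁻¹ = g * g * h * (g * g)⁻¹ by group, tmul_self_conj]
    have hg := Subgroup.mem_center_iff.mp (tmul_self_mem_center g)
    have hh := Subgroup.mem_center_iff.mp (tmul_self_mem_center h)
    rw [h₁, h₂, h₃, tmulSymm, hg]
    simp only [mul_assoc, mul_right_inj]
    rw [← mul_assoc, hh, mul_assoc]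
  have h := conj_form y (y⁻¹ * x * y)
  rwa [show y * (y⁻¹ * x * y) * y⁻¹ = x by group, show y * (y⁻¹ * x * y) = x * y by group,
    show y⁻¹ * x * y = y⁻¹ * x * y⁻¹⁻¹ by group, tmul_self_conj] at h

lemma tmulSymm_conj (g x y : G) :
    tmulSymm (g * x * g⁻¹) (g * y * g⁻¹) = tmulSymm x y := by
  have h := tmul_self_mul (g * x * g⁻¹) (g * y * g⁻¹)
  rwa [show g * x * g⁻¹ * (g * y * g⁻¹) = g * (x * y) * g⁻¹ by group, tmul_self_conj,
    tmul_self_conj, tmul_self_conj, tmul_self_mul, mul_right_inj, eq_comm] at h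

lemma tmulSymm_mul_left (x x' y : G) : tmulSymm (x * x') y = tmulSymm x' y * tmulSymm x y := by
  have hc := Subgroup.mem_center_iff.mp (tmulSymm_mem_center x y)
  calc tmulSymm (x * x') y
      = tmul (x * x' * x⁻¹) (x * y * x⁻¹) * tmulSymm x y * tmul (x * y * x⁻¹) (x * x' * x⁻¹) := by
        rw [tmulSymm, tmulSymm, tmul_rel₁ x x' y, tmul_rel₂ y x x']
        simp only [mul_assoc]
    _ = tmulSymm (x * x' * x⁻¹) (x * y * x⁻¹) * tmulSymm x y := by
        rw [mul_assoc, ← hc, ← mul_assoc, ← tmulSymm]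
    _ = tmulSymm x' y * tmulSymm x y := by rw [tmulSymm_conj]

section Abelianization

open scoped IsMulCommutative

/-- Landing in the centre makes the target abelian, so that this factors through `G_ab`. -/
def tmulSymmLeft (y : G) : G →* Subgroup.center (TS G) :=
  MonoidHom.mk' (fun x => ⟨tmulSymm x y, tmulSymm_mem_center x y⟩) fun a b =>
    Subtype.ext <| (tmulSymm_mul_left a b y).trans
      (Subgroup.mem_center_iff.mp (tmulSymm_mem_center b y) _).symm

@[simp] lemma tmulSymmLeft_apply_coe (x y : G) : (tmulSymmLeft y x : TS G) = tmulSymm x y :=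
  rfl

lemma tmulSymm_eq_of_abelianization_eq {x x' y y' : G}
    (hx : Abelianization.of x = Abelianization.of x')
    (hy : Abelianization.of y = Abelianization.of y') : tmulSymm x y = tmulSymm x' y' := by
  have left : ∀ {u u' : G} (v : G), Abelianization.of u = Abelianization.of u' →
      tmulSymm u v = tmulSymm u' v := fun v h => by
    simpa using congrArg (fun a => (Abelianization.lift (tmulSymmLeft v) a : TS G)) h
  rw [left y hx, tmulSymm_comm, left x' hy, tmulSymm_comm]

end Abelianization

lemma tmap_tmulSymm (f : G →* H) (x y : G) : tmap f (tmulSymm x y) = tmulSymm (f x) (f y) := by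
  simp [tmulSymm]

lemma delta_eq_closure : delta G = Subgroup.closure {t | ∃ x y : G, t = tmulSymm x y} :=
  Subgroup.normalClosure_eq_closure_of_subset_center fun _ ⟨x, y, ht⟩ =>
    ht ▸ tmulSymm_mem_center x y

lemma tmap_mem_delta (f : G →* H) {t : TS G} (ht : t ∈ delta G) : tmap f t ∈ delta H :=
  (QuotientGroup.eq_one_iff _).mp (MonoidHom.mem_ker.mp (delta_le_comap_delta f ht))

def deltaMap (f : G →* H) : delta G →* delta H :=
  ((tmap f).comp (delta G).subtype).codRestrict (delta H) fun t => tmap_mem_delta f t.2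

@[simp] lemma deltaMap_apply_coe (f : G →* H) (t : delta G) :
    (deltaMap f t : TS H) = tmap f t :=
  rfl

lemma deltaMap_id : deltaMap (MonoidHom.id G) = MonoidHom.id (delta G) := by
  ext t; simp [tmap_id]

lemma deltaMap_comp (f : H →* K) (e : G →* H) :
    deltaMap (f.comp e) = (deltaMap f).comp (deltaMap e) := by
  ext t; simp [tmap_comp]

lemma deltaMap_eq_id {φ : G →* G} (hφ : ∀ x, Abelianization.of (φ x) = Abelianization.of x) :
    deltaMap φ = MonoidHom.id (delta G) := by
  have fixes : delta G ≤ MonoidHom.eqLocus (tmap φ) (MonoidHom.id _) := by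
    rw [delta_eq_closure, Subgroup.closure_le]
    rintro _ ⟨x, y, rfl⟩
    exact (tmap_tmulSymm φ x y).trans (tmulSymm_eq_of_abelianization_eq (hφ x) (hφ y))
  ext t
  exact fixes t.2

def deltaEquivOfSplitting (σ : Abelianization G →* G)
    (hσ : Abelianization.of.comp σ = MonoidHom.id _) : delta G ≃* delta (Abelianization G) :=
  MonoidHom.toMulEquiv (deltaMap Abelianization.of) (deltaMap σ)
    (by rw [← deltaMap_comp]; exact deltaMap_eq_id fun x => DFunLike.congr_fun hσ _)
    (by rw [← deltaMap_comp, hσ, deltaMap_id])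

end NATensor

lemma exists_abelianization_splitting_of_complement {G : Type*} [Group G] {B : Subgroup G}
    (hB1 : commutator G ⊔ B = ⊤) (hB2 : commutator G ⊓ B = ⊥) :
    ∃ σ : Abelianization G →* G, Abelianization.of.comp σ = MonoidHom.id _ := by
  have hc : B.IsComplement' (commutator G) := by
    refine Subgroup.isComplement'_of_disjoint_and_mul_eq_univ ?_ ?_
    · rwa [disjoint_iff, inf_comm]
    · rw [← Subgroup.mul_normal, sup_comm, hB1, Subgroup.coe_top]
  exact ⟨B.subtype.comp (hc.QuotientMulEquiv : Abelianization G ≃* B).toMonoidHom,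
    MonoidHom.ext hc.quotientGroupMk_leftQuotientEquiv⟩

open NATensor in
/-- if the derived subgroup `[G,G]` has a complement `B` in `G`
(`G = [G,G]B` and `[G,G] ∩ B = 1`), then `Δ(G) ≅ Δ(G_ab)`. -/
theorem delta_iso_delta_abelianization (G : Type*) [Group G]
    (B : Subgroup G) (hB1 : commutator G ⊔ B = ⊤) (hB2 : commutator G ⊓ B = ⊥) :
    Nonempty (↥(delta G) ≃* ↥(delta (Abelianization G))) := by
  obtain ⟨σ, hσ⟩ := exists_abelianization_splitting_of_complement hB1 hB2
  exact ⟨deltaEquivOfSplitting σ hσ⟩
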